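/- arXiv:math/0210075 — 4 statements merged into one kernel-verified Lean document; each statement's English description precedes it below -/
import Mathlib

section
/- For every polynomial g ∈ R[t] over a commutative ring R, the polarized Dedekind–Mertens number μ̃_R(g) is at most μ_R(c(g)), the minimal number of generators of the content ideal c(g). In particular, for any f_1, …, f_k ∈ R[t] with k = μ_R(c(g)), one has ∑_{i=1}^k c(f_i g)·c(f_1)⋯ĉ(f_i)⋯c(f_k) = c(f_1)⋯c(f_k)·c(g). -/
open Polynomial

/-- The content ideal of a polynomial: the ideal generated by its coefficients. -/
noncomputable def cont {R : Type*} [CommRing R] (p : R[X]) : Ideal R :=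
  Ideal.span (Set.range p.coeff)

/-- The minimal number of generators of an ideal. -/
noncomputable def mug {R : Type*} [CommRing R] (I : Ideal R) : ℕ :=
  sInf {n | ∃ x : Fin n → R, Ideal.span (Set.range x) = I}

/-- The Dedekind--Mertens number of a polynomial. -/
noncomputable def dmNumber (R : Type*) [CommRing R] (g : R[X]) : ℕ :=
  sInf {k | 0 < k ∧ ∀ f : R[X], cont (f * g) * cont f ^ (k - 1) = cont f ^ k * cont g}

/-- The polarized Dedekind--Mertens number of a polynomial. -/
noncomputable def polDmNumber (R : Type*) [CommRing R] (g : R[X]) : ℕ :=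
  sInf {k | 0 < k ∧ ∀ f : Fin k → R[X],
    (∑ i, cont (f i * g) * ∏ j ∈ Finset.univ.erase i, cont (f j)) =
      (∏ i, cont (f i)) * cont g}

/-- `x` is in the integral closure of the ideal `I`. -/
def memIntCl {R : Type*} [CommRing R] (I : Ideal R) (x : R) : Prop :=
  ∃ k : ℕ, 0 < k ∧ ∃ a : ℕ → R, (∀ i, 1 ≤ i → i ≤ k → a i ∈ I ^ i) ∧
    x ^ k + ∑ i ∈ Finset.Icc 1 k, a i * x ^ (k - i) = 0

/-!
Both sides are compatible with localization and the polarized sum is always contained in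
`c(f₁)⋯c(f_k)c(g)`, so we may assume `R` local with maximal ideal `𝔪`; by Nakayama it then
suffices to show `c(f₁)⋯c(f_k)c(g) ⊆ Σ + 𝔪 c(f₁)⋯c(f_k)c(g)`, where `Σ` is the polarized sum.

Reducing the coefficients of `g` modulo `𝔪 c(g)` to echelon form, from the top degree down,
produces at most `k = μ(c(g))` pivot degrees `p₀ ≥ p₁ ≥ ⋯` such that every coefficient of
degree `u` is a combination of pivot coefficients of degree `≥ u` modulo `𝔪 c(g)`. Pair the
`l`-th pivot with `f_l`. Reading off the coefficient of `t ^ (j_l + p_l)` in `f_l g` writes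
`g_{p_l} ∏ᵢ f_{i,jᵢ}` as an element of `Σ` plus terms `g_{p_i} ∏ f_{m,j'ₘ}` in which either an
earlier pivot occurs, or `j'` raises the exponent `j_l`; a lexicographic induction on `(l, j)`
therefore puts every `g_{p_l} ∏ᵢ f_{i,jᵢ}` into `Σ + 𝔪 c(f₁)⋯c(f_k)c(g)`.
-/

open IsLocalRing

section Content

variable {R : Type*} [CommRing R]

theorem cont_eq_contentIdeal (p : R[X]) : cont p = p.contentIdeal := by
  refine le_antisymm (Ideal.span_le.2 ?_) (Ideal.span_mono ?_)
  · rintro _ ⟨n, rfl⟩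
    exact p.coeff_mem_contentIdeal n
  · intro c hc
    obtain ⟨n, -, rfl⟩ := mem_coeffs_iff.1 hc
    exact ⟨n, rfl⟩

theorem coeff_mem_cont (p : R[X]) (n : ℕ) : p.coeff n ∈ cont p :=
  Ideal.subset_span ⟨n, rfl⟩

theorem cont_fg (p : R[X]) : (cont p).FG := by
  rw [cont_eq_contentIdeal]
  exact p.contentIdeal_FG

theorem cont_map {S : Type*} [CommRing S] (φ : R →+* S) (p : R[X]) :
    cont (p.map φ) = (cont p).map φ := by
  simp only [cont_eq_contentIdeal, contentIdeal_map_eq_map_contentIdeal]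

theorem prod_cont_eq_span {ι : Type*} [Fintype ι] (f : ι → R[X]) :
    ∏ i, cont (f i) = Ideal.span (Set.range fun j : ι → ℕ => ∏ i, (f i).coeff (j i)) := by
  classical
  simp only [cont, Ideal.prod_span]
  congr 1
  ext z
  rw [Set.mem_finsetProd]
  constructor
  · rintro ⟨h, hh, rfl⟩
    choose j hj using fun i => hh (Finset.mem_univ i)
    exact ⟨j, by simp only [hj]⟩
  · rintro ⟨j, rfl⟩
    exact ⟨fun i => (f i).coeff (j i), fun _ => ⟨j _, rfl⟩, rfl⟩

theorem map_prod_cont_mul_cont {S : Type*} [CommRing S] (φ : R →+* S) {ι : Type*} [Fintype ι]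
    (f : ι → R[X]) (g : R[X]) :
    ((∏ i, cont (f i)) * cont g).map φ = (∏ i, cont ((f i).map φ)) * cont (g.map φ) := by
  simp only [cont_map, ← Ideal.mapHom_apply, map_mul, map_prod]

theorem exists_span_range_eq_of_fg {I : Ideal R} (hI : I.FG) :
    ∃ x : Fin (mug I) → R, Ideal.span (Set.range x) = I :=
  Nat.sInf_mem (Submodule.fg_iff_exists_fin_generating_family.1 hI)

end Content

section PolarizedSum

variable {R : Type*} [CommRing R] {ι : Type*} [Fintype ι] [DecidableEq ι]

noncomputable def polDmSum (f : ι → R[X]) (g : R[X]) : Ideal R :=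
  ∑ i, cont (f i * g) * ∏ j ∈ Finset.univ.erase i, cont (f j)

theorem polDmSum_le (f : ι → R[X]) (g : R[X]) :
    polDmSum f g ≤ (∏ i, cont (f i)) * cont g := by
  rw [polDmSum, Ideal.sum_eq_sup]
  refine Finset.sup_le fun i _ => ?_
  calc cont (f i * g) * ∏ j ∈ Finset.univ.erase i, cont (f j)
      ≤ cont (f i) * cont g * ∏ j ∈ Finset.univ.erase i, cont (f j) := by
        simp only [cont_eq_contentIdeal]
        exact Ideal.mul_mono_left (contentIdeal_mul_le_mul_contentIdeal _ _)
    _ = (∏ i, cont (f i)) * cont g := by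
        rw [mul_right_comm, Finset.mul_prod_erase _ (fun j => cont (f j)) (Finset.mem_univ i)]

theorem le_polDmSum (f : ι → R[X]) (g : R[X]) (l : ι) :
    cont (f l * g) * ∏ i ∈ Finset.univ.erase l, cont (f i) ≤ polDmSum f g := by
  rw [polDmSum, Ideal.sum_eq_sup]
  exact Finset.le_sup (f := fun i => cont (f i * g) * ∏ j ∈ Finset.univ.erase i, cont (f j))
    (Finset.mem_univ l)

theorem map_polDmSum {S : Type*} [CommRing S] (φ : R →+* S) (f : ι → R[X]) (g : R[X]) :
    (polDmSum f g).map φ = polDmSum (fun i => (f i).map φ) (g.map φ) := by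
  simp only [polDmSum, ← Polynomial.map_mul, cont_map, ← Ideal.mapHom_apply, map_sum, map_mul,
    map_prod]

end PolarizedSum

section LexKey

variable {k : ℕ}

/-- The pair `(l, j)` is compared through `(N m + 1 - j m)_{m ≤ l}`, lexicographically, padded
by zeros: truncating to a shorter prefix or raising `j l` (within the bound `N l`) decreases it. -/
def lexKey (N : Fin k → ℕ) (l : Fin k) (j : Fin k → ℕ) : Lex (Fin k → ℕ) :=
  toLex fun m => if m ≤ l then N m + 1 - j m else 0

theorem lexKey_lt_of_lt {N : Fin k → ℕ} {i l : Fin k} {j j' : Fin k → ℕ} (hil : i < l)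
    (hj : ∀ m ≤ i, j' m = j m) (hjN : ∀ m, j m ≤ N m) : lexKey N i j' < lexKey N l j := by
  have hi : i.val + 1 < k := by omega
  refine ⟨⟨i.val + 1, hi⟩, fun m hm => ?_, ?_⟩
  · have hmi : m ≤ i := Fin.le_def.2 (Nat.lt_succ_iff.1 hm)
    simp only [lexKey, Pi.toLex_apply]
    rw [if_pos hmi, if_pos (hmi.trans hil.le), hj m hmi]
  · have h1 : ¬ (⟨i.val + 1, hi⟩ : Fin k) ≤ i := by simp [Fin.le_def]
    have h2 : (⟨i.val + 1, hi⟩ : Fin k) ≤ l := Fin.le_def.2 (Nat.succ_le_of_lt hil)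
    simp only [lexKey, Pi.toLex_apply, h1, h2, if_true, if_false]
    have := hjN ⟨i.val + 1, hi⟩
    omega

theorem lexKey_update_lt {N : Fin k → ℕ} {i l : Fin k} {j : Fin k → ℕ} {s : ℕ} (hli : l ≤ i)
    (hs : j l < s) (hsN : s ≤ N l) : lexKey N i (Function.update j l s) < lexKey N l j := by
  refine ⟨l, fun m hm => ?_, ?_⟩
  · simp only [lexKey, Pi.toLex_apply, hm.le, hm.le.trans hli, Function.update_of_ne hm.ne,
      if_true]
  · simp only [lexKey, Pi.toLex_apply, hli, le_refl, if_true, Function.update_self]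
    omega

end LexKey

theorem Ideal.mul_mem_of_mem_span_sup {R : Type*} [CommRing R] {A : Set R} {J G : Ideal R}
    {y z : R} (hy : y ∈ Ideal.span A ⊔ J) (hA : ∀ a ∈ A, a * z ∈ G) (hJ : ∀ b ∈ J, b * z ∈ G) :
    y * z ∈ G :=
  (sup_le (Ideal.span_le.2 hA) hJ :
    Ideal.span A ⊔ J ≤ Submodule.comap (LinearMap.mulRight R z) G) hy

section Pivots

open Finset

variable {R : Type*} [CommRing R]

def IsPivotFamily (I : Ideal R) (g : R[X]) {k : ℕ} (p : Fin k → ℕ) : Prop :=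
  Antitone p ∧ ∀ u, g.coeff u ∈ Ideal.span ((g.coeff ∘ p) '' {i | u ≤ p i}) ⊔ I * cont g

variable {I : Ideal R} {g : R[X]} {k : ℕ} {p : Fin k → ℕ}

theorem coeff_mul_add_eq_add_sum_erase (f g : R[X]) (a b : ℕ) :
    (f * g).coeff (a + b) = f.coeff a * g.coeff b +
      ∑ x ∈ (antidiagonal (a + b)).erase (a, b), f.coeff x.1 * g.coeff x.2 := by
  rw [coeff_mul,
    ← Finset.add_sum_erase _ _ (mem_antidiagonal.2 rfl : (a, b) ∈ antidiagonal (a + b))]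

theorem prod_coeff_update {ι : Type*} [Fintype ι] [DecidableEq ι] (f : ι → R[X]) (j : ι → ℕ)
    (l : ι) (s : ℕ) : ∏ i, (f i).coeff (Function.update j l s i) =
      (f l).coeff s * ∏ i ∈ Finset.univ.erase l, (f i).coeff (j i) := by
  rw [← Finset.mul_prod_erase _ _ (Finset.mem_univ l), Function.update_self]
  congr 1
  exact Finset.prod_congr rfl fun i hi => by
    rw [Function.update_of_ne (Finset.ne_of_mem_erase hi)]

/-- The coefficient of `t ^ (j l + q)` in `f l * g`, solved for its term `g_q f_{l, j l}`. -/
theorem coeff_mul_prod_coeff_eq {ι : Type*} [Fintype ι] [DecidableEq ι] (f : ι → R[X])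
    (g : R[X]) (l : ι) (j : ι → ℕ) (q : ℕ) :
    g.coeff q * ∏ i, (f i).coeff (j i) =
      (f l * g).coeff (j l + q) * ∏ i ∈ univ.erase l, (f i).coeff (j i) -
        ∑ x ∈ (antidiagonal (j l + q)).erase (j l, q),
          g.coeff x.2 * ∏ i, (f i).coeff (Function.update j l x.1 i) := by
  simp only [prod_coeff_update]
  rw [← mul_prod_erase _ _ (mem_univ l), coeff_mul_add_eq_add_sum_erase, add_mul, sum_mul,
    add_sub_assoc, ← sum_sub_distrib, sum_eq_zero fun x _ => by ring]
  ring

theorem IsPivotFamily.coeff_mul_prod_coeff_mem (hp : IsPivotFamily I g p) (f : Fin k → R[X])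
    (l : Fin k) (j : Fin k → ℕ) :
    g.coeff (p l) * ∏ i, (f i).coeff (j i) ∈
      polDmSum f g ⊔ I * ((∏ i, cont (f i)) * cont g) := by
  classical
  set G := polDmSum f g ⊔ I * ((∏ i, cont (f i)) * cont g)
  set N : Fin k → ℕ := fun i => (f i).natDegree
  obtain ⟨κ, hκ⟩ : ∃ κ, lexKey N l j = κ := ⟨_, rfl⟩
  induction κ using WellFoundedLT.induction generalizing l j with
  | _ κ ih =>
  subst hκ
  by_cases hzero : ∃ i, (f i).coeff (j i) = 0
  · obtain ⟨i, hi⟩ := hzero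
    rw [Finset.prod_eq_zero (Finset.mem_univ i) hi, mul_zero]
    exact zero_mem G
  simp only [not_exists] at hzero
  have hjN : ∀ i, j i ≤ N i := fun i => le_natDegree_of_ne_zero (hzero i)
  rw [coeff_mul_prod_coeff_eq f g l j (p l)]
  refine sub_mem (le_sup_left (b := I * _) (le_polDmSum f g l
    (Ideal.mul_mem_mul (coeff_mem_cont _ _) (Ideal.prod_mem_prod fun i _ => coeff_mem_cont _ _))))
    (sum_mem fun x hx => ?_)
  obtain ⟨hxne, hxmem⟩ := mem_erase.1 hx
  have hxsum : x.1 + x.2 = j l + p l := mem_antidiagonal.1 hxmem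
  by_cases hfx : (f l).coeff x.1 = 0
  · rw [prod_coeff_update, hfx, zero_mul, mul_zero]
    exact zero_mem G
  refine Ideal.mul_mem_of_mem_span_sup (hp.2 x.2) ?_ fun y hy => ?_
  · rintro _ ⟨i, hi, rfl⟩
    refine ih _ ?_ i _ rfl
    rcases lt_or_ge i l with hil | hli
    · exact lexKey_lt_of_lt hil (fun m hm => Function.update_of_ne (hm.trans_lt hil).ne _ _) hjN
    · have hx2 : x.2 ≠ p l := fun h => hxne (Prod.ext (by omega) h)
      have hpil : p i ≤ p l := hp.1 hli
      have hi' : x.2 ≤ p i := hi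
      exact lexKey_update_lt hli (by omega) (le_natDegree_of_ne_zero hfx)
  · refine le_sup_right (a := polDmSum f g) ?_
    have hmem := Ideal.mul_mem_mul hy
      (Ideal.prod_mem_prod (s := univ) fun i _ => coeff_mem_cont (f i) (Function.update j l x.1 i))
    rwa [mul_assoc, mul_comm (cont g)] at hmem

theorem IsPivotFamily.prod_cont_mul_cont_le (hp : IsPivotFamily I g p) (f : Fin k → R[X]) :
    (∏ i, cont (f i)) * cont g ≤ polDmSum f g ⊔ I * ((∏ i, cont (f i)) * cont g) := by
  set G := polDmSum f g ⊔ I * ((∏ i, cont (f i)) * cont g)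
  have hC : cont g ≤ Ideal.span (Set.range (g.coeff ∘ p)) ⊔ I * cont g := by
    refine Ideal.span_le.2 ?_
    rintro _ ⟨u, rfl⟩
    exact sup_le_sup_right (Ideal.span_mono (Set.image_subset_range _ _)) (I * cont g) (hp.2 u)
  calc (∏ i, cont (f i)) * cont g
      ≤ (∏ i, cont (f i)) * (Ideal.span (Set.range (g.coeff ∘ p)) ⊔ I * cont g) :=
        Ideal.mul_mono_right hC
    _ = (∏ i, cont (f i)) * Ideal.span (Set.range (g.coeff ∘ p)) ⊔
          I * ((∏ i, cont (f i)) * cont g) := by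
        rw [Ideal.mul_sup, mul_left_comm]
    _ ≤ G := by
        refine sup_le ?_ le_sup_right
        rw [prod_cont_eq_span, Ideal.span_mul_span', Ideal.span_le]
        rintro _ ⟨_, ⟨j, rfl⟩, _, ⟨i, rfl⟩, rfl⟩
        show _ * _ ∈ G
        rw [mul_comm]
        exact hp.coeff_mul_prod_coeff_mem f i j

end Pivots

section LocalRing

variable {R : Type*} [CommRing R] [IsLocalRing R] [DecidableEq R]

theorem IsLocalRing.exists_span_le_sup_span_erase {F C : Ideal R} {s : Finset R} {a : R}
    (hsC : Ideal.span (s : Set R) ≤ C) (ha : a ∈ F ⊔ Ideal.span (s : Set R))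
    (ha' : a ∉ F ⊔ maximalIdeal R * C) :
    ∃ x ∈ s, Ideal.span (s : Set R) ≤ F ⊔ Ideal.span {a} ⊔ Ideal.span (s.erase x : Set R) := by
  obtain ⟨φ, hφ, w, hw, rfl⟩ := Submodule.mem_sup.1 ha
  obtain ⟨c, -, rfl⟩ := Submodule.mem_span_finset.1 hw
  obtain ⟨x, hxs, hcx⟩ : ∃ x ∈ s, c x ∉ maximalIdeal R := by
    by_contra! hc
    refine ha' (add_mem (Ideal.mem_sup_left hφ) (Ideal.mem_sup_right (sum_mem fun y hy => ?_)))
    exact Ideal.mul_mem_mul (hc y hy) (hsC (Ideal.subset_span hy))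
  set F' := F ⊔ Ideal.span {φ + ∑ y ∈ s, c y • y} ⊔ Ideal.span (s.erase x : Set R)
  have hrest : ∑ y ∈ s.erase x, c y • y ∈ F' :=
    Ideal.mem_sup_right (sum_mem fun y hy => Ideal.mul_mem_left _ _ (Ideal.subset_span hy))
  have hcx_mem : c x * x ∈ F' := by
    have hsplit : c x * x = (φ + ∑ y ∈ s, c y • y) - φ - ∑ y ∈ s.erase x, c y • y := by
      rw [← Finset.add_sum_erase s _ hxs, smul_eq_mul]
      ring
    rw [hsplit]
    refine sub_mem (sub_mem ?_ (Ideal.mem_sup_left (Ideal.mem_sup_left hφ))) hrest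
    exact Ideal.mem_sup_left (Ideal.mem_sup_right (Ideal.mem_span_singleton_self _))
  refine ⟨x, hxs, Ideal.span_le.2 fun y hy => ?_⟩
  by_cases hyx : y = x
  · subst hyx
    exact (Ideal.unit_mul_mem_iff_mem F' ((IsLocalRing.notMem_maximalIdeal).1 hcx)).1 hcx_mem
  · exact Ideal.mem_sup_right (Ideal.subset_span (Finset.mem_erase.2 ⟨hyx, hy⟩))

/-- Inductive form of the echelon reduction: `F` is spanned by the pivot coefficients already
chosen, and all coefficients of degree `> D` are already accounted for. -/
theorem IsLocalRing.exists_pivots (c : ℕ → R) (C : Ideal R) (k : ℕ) (s : Finset R)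
    (F : Ideal R) (D : ℕ) (hs : s.card ≤ k) (hsC : Ideal.span (s : Set R) ≤ C)
    (hcs : ∀ u, c u ∈ F ⊔ Ideal.span (s : Set R))
    (hD : ∀ u, D < u → c u ∈ F ⊔ maximalIdeal R * C) :
    ∃ p : Fin k → ℕ, Antitone p ∧ (∀ i, p i ≤ D) ∧
      ∀ u, c u ∈ F ⊔ Ideal.span ((c ∘ p) '' {i | u ≤ p i}) ⊔ maximalIdeal R * C := by
  induction k generalizing s F D with
  | zero =>
    obtain rfl : s = ∅ := Finset.card_eq_zero.1 (Nat.le_zero.1 hs)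
    refine ⟨0, antitone_const, fun _ => Nat.zero_le _, fun u => ?_⟩
    have hF : c u ∈ F := by simpa using hcs u
    exact Ideal.mem_sup_left (Ideal.mem_sup_left hF)
  | succ k ih =>
    classical
    by_cases hall : ∀ u, c u ∈ F ⊔ maximalIdeal R * C
    · exact ⟨0, antitone_const, fun _ => Nat.zero_le _,
        fun u => sup_le_sup_right le_sup_left (maximalIdeal R * C) (hall u)⟩
    simp only [not_forall] at hall
    obtain ⟨u₀, hu₀⟩ := hall
    set d := Nat.findGreatest (fun u => c u ∉ F ⊔ maximalIdeal R * C) D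
    have hdD : d ≤ D := Nat.findGreatest_le D
    have hd : c d ∉ F ⊔ maximalIdeal R * C :=
      Nat.findGreatest_spec (P := fun u => c u ∉ F ⊔ maximalIdeal R * C)
        (not_lt.1 fun h => hu₀ (hD u₀ h)) hu₀
    have hdmax : ∀ u, d < u → c u ∈ F ⊔ maximalIdeal R * C := fun u hu => by
      by_contra h
      rcases le_or_gt u D with huD | huD
      · exact Nat.findGreatest_is_greatest hu huD h
      · exact h (hD u huD)
    obtain ⟨x, hxs, hspan⟩ := exists_span_le_sup_span_erase hsC (hcs d) hd
    obtain ⟨p', hp'anti, hp'd, hp'⟩ := ih (s.erase x) (F ⊔ Ideal.span {c d}) d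
      (by rw [Finset.card_erase_of_mem hxs]; omega)
      ((Ideal.span_mono (Finset.coe_subset.2 (s.erase_subset x))).trans hsC)
      (fun u => sup_le (le_sup_left.trans le_sup_left) hspan (hcs u))
      (fun u hu => sup_le_sup_right le_sup_left (maximalIdeal R * C) (hdmax u hu))
    refine ⟨Fin.cons d p', ?_, fun i => Fin.cases hdD (fun i => (hp'd i).trans hdD) i, fun u => ?_⟩
    · exact antitone_iff_forall_lt.2
        ((Fin.liftFun_cons (· ≥ ·)).2 ⟨hp'd, antitone_iff_forall_lt.1 hp'anti⟩)
    rcases le_or_gt u d with hud | hud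
    · refine sup_le_sup_right (sup_le (sup_le le_sup_left (le_sup_of_le_right ?_))
        (le_sup_of_le_right (Ideal.span_mono ?_))) (maximalIdeal R * C) (hp' u)
      · exact Ideal.span_le.2 (Set.singleton_subset_iff.2 (Ideal.subset_span ⟨0, hud, rfl⟩))
      · rintro _ ⟨i, hi, rfl⟩
        exact ⟨i.succ, hi, rfl⟩
    · exact sup_le_sup_right le_sup_left (maximalIdeal R * C) (hdmax u hud)

end LocalRing

section Main

variable {R : Type*} [CommRing R]

theorem IsLocalRing.exists_isPivotFamily [IsLocalRing R] (g : R[X]) {k : ℕ} (x : Fin k → R)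
    (hx : Ideal.span (Set.range x) = cont g) :
    ∃ p : Fin k → ℕ, IsPivotFamily (maximalIdeal R) g p := by
  classical
  have hsx : ((Finset.univ.image x : Finset R) : Set R) = Set.range x := by simp
  obtain ⟨p, hp, -, hpu⟩ := exists_pivots g.coeff (cont g) k (Finset.univ.image x) ⊥ g.natDegree
    (Finset.card_image_le.trans (by simp)) (by rw [hsx, hx])
    (fun u => by rw [hsx, hx, bot_sup_eq]; exact coeff_mem_cont g u)
    (fun u hu => by rw [coeff_eq_zero_of_natDegree_lt hu]; exact zero_mem _)
  exact ⟨p, hp, fun u => by simpa using hpu u⟩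

theorem IsLocalRing.prod_cont_mul_cont_le_polDmSum [IsLocalRing R] {g : R[X]} {k : ℕ}
    {x : Fin k → R} (hx : Ideal.span (Set.range x) = cont g) (f : Fin k → R[X]) :
    (∏ i, cont (f i)) * cont g ≤ polDmSum f g := by
  obtain ⟨p, hp⟩ := exists_isPivotFamily g x hx
  have hfg : ((∏ i, cont (f i)) * cont g).FG := by
    refine (Finset.prod_induction _ Submodule.FG (fun _ _ => Submodule.FG.mul) ?_
      fun i _ => cont_fg (f i)).mul (cont_fg g)
    rw [Ideal.one_eq_top]
    exact Module.Finite.fg_top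
  exact Submodule.le_of_le_smul_of_le_jacobson_bot hfg (maximalIdeal_le_jacobson ⊥)
    (hp.prod_cont_mul_cont_le f)

theorem polDmSum_eq_of_span_eq {g : R[X]} {k : ℕ} {x : Fin k → R}
    (hx : Ideal.span (Set.range x) = cont g) (f : Fin k → R[X]) :
    polDmSum f g = (∏ i, cont (f i)) * cont g := by
  refine le_antisymm (polDmSum_le f g) (Ideal.le_of_localization_maximal fun P _ => ?_)
  set φ := algebraMap R (Localization.AtPrime P)
  rw [map_polDmSum, map_prod_cont_mul_cont]
  refine IsLocalRing.prod_cont_mul_cont_le_polDmSum (x := φ ∘ x) ?_ _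
  rw [cont_map, ← hx, Ideal.map_span, Set.range_comp]

end Main

/-- Theorem 2.5: the polarized Dedekind--Mertens number of `g` is bounded above by the
minimal number of generators of the content ideal `c(g)`; in particular, the polarized
Dedekind--Mertens formula holds for `k = μ_R(c(g))` polynomials. -/
theorem polDmNumber_le_mug_content {R : Type*} [CommRing R] (g : R[X]) (hg : g ≠ 0) :
    polDmNumber R g ≤ mug (cont g) ∧
    (∀ f : Fin (mug (cont g)) → R[X],
      (∑ i, cont (f i * g) * ∏ j ∈ Finset.univ.erase i, cont (f j)) =
        (∏ i, cont (f i)) * cont g) := by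
  obtain ⟨x, hx⟩ := exists_span_range_eq_of_fg (cont_fg g)
  have hformula : ∀ f : Fin (mug (cont g)) → R[X], polDmSum f g = (∏ i, cont (f i)) * cont g :=
    fun f => polDmSum_eq_of_span_eq hx f
  have hpos : 0 < mug (cont g) := by
    refine Nat.pos_of_ne_zero fun h0 => hg ?_
    have : IsEmpty (Fin (mug (cont g))) := by rw [h0]; infer_instance
    rw [← contentIdeal_eq_bot_iff, ← cont_eq_contentIdeal, ← hx, Set.range_eq_empty,
      Ideal.span_empty]
  exact ⟨Nat.sInf_le ⟨hpos, hformula⟩, hformula⟩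
end

section
/- Let (R, m) be a Noetherian local ring and let R̂ be its m-adic completion. For every polynomial g ∈ R[t], the Dedekind–Mertens number of g over R equals the Dedekind–Mertens number of g over R̂: μ_R(g) = μ_{R̂}(g). -/
open Polynomial

/-!
Over a Noetherian local ring `(A, m)`, the inclusion `c(f)^k c(g) ⊆ c(fg) c(f)^(k-1)` (the
reverse one always holds) can be checked modulo every `m^s`: by Krull's intersection theorem,
applied to the quotient by the smaller ideal, an ideal of `A` is the intersection of its
`m`-adic neighbourhoods. Content commutes with base change, so modulo `m^s` this is the
Dedekind–Mertens identity over `A/m^s`. Since `R/m^s ≅ R̂/m̂^s`, the identity with exponent `k`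
therefore holds over `R` iff it holds over all `R/m^s` iff it holds over `R̂`.

This needs `R̂` to be Noetherian. An ideal `L` of a ring `S` that is complete for `J` and has
`S/J^n ≅ R/I^n` is recovered, by successive approximation, from finitely many elements of `L`
lifting generators of the "initial ideals" `I^s ∩ ι⁻¹(L + J^(s+1))` of `R`; finitely many
suffice because these ideals form an `I`-filtration of `R` inside the `I`-adic one, hence a
stable filtration by Artin–Rees.
-/

theorem Ideal.le_of_forall_le_sup_pow {A : Type*} [CommRing A] [IsNoetherianRing A]
    {I X Y : Ideal A} (hI : I ≤ Ideal.jacobson ⊥) (h : ∀ n : ℕ, Y ≤ X ⊔ I ^ n) : Y ≤ X := by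
  intro y hy
  have hbot := Ideal.iInf_pow_smul_eq_bot_of_le_jacobson (M := A ⧸ X) I hI
  have : Submodule.Quotient.mk (p := X) y ∈ ⨅ n : ℕ, I ^ n • (⊤ : Submodule A (A ⧸ X)) := by
    refine Submodule.mem_iInf _ |>.mpr fun n ↦ ?_
    obtain ⟨x, hx, t, ht, rfl⟩ := Submodule.mem_sup.mp (h n hy)
    rw [Submodule.Quotient.mk_add, (Submodule.Quotient.mk_eq_zero X).mpr hx, zero_add,
      ← mul_one t, ← smul_eq_mul, Submodule.Quotient.mk_smul]
    exact Submodule.smul_mem_smul ht trivial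
  rwa [hbot, Submodule.mem_bot, Submodule.Quotient.mk_eq_zero] at this

section DedekindMertens

variable {A B : Type*} [CommRing A] [CommRing B]

theorem cont_map_s6 (σ : A →+* B) (p : A[X]) : cont (p.map σ) = (cont p).map σ := by
  simp only [cont, Ideal.map_span, ← Set.range_comp]
  congr 1
  ext n
  simp

theorem cont_mul_le (p q : A[X]) : cont (p * q) ≤ cont p * cont q := by
  refine Ideal.span_le.mpr ?_
  rintro _ ⟨n, rfl⟩
  rw [coeff_mul]
  exact sum_mem fun c _ ↦ Ideal.mul_mem_mul (Ideal.subset_span ⟨c.1, rfl⟩)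
    (Ideal.subset_span ⟨c.2, rfl⟩)

def DMIdentity (g : A[X]) (k : ℕ) : Prop :=
  ∀ f : A[X], cont (f * g) * cont f ^ (k - 1) = cont f ^ k * cont g

theorem cont_mul_mul_pow_le (f g : A[X]) {k : ℕ} (hk : 0 < k) :
    cont (f * g) * cont f ^ (k - 1) ≤ cont f ^ k * cont g :=
  calc cont (f * g) * cont f ^ (k - 1) ≤ cont f * cont g * cont f ^ (k - 1) :=
        Ideal.mul_mono_left (cont_mul_le f g)
    _ = cont f ^ k * cont g := by
        rw [mul_right_comm, ← pow_succ', Nat.sub_add_cancel hk]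

theorem DMIdentity.map_of_surjective {g : A[X]} {k : ℕ} (h : DMIdentity g k) {σ : A →+* B}
    (hσ : Function.Surjective σ) : DMIdentity (g.map σ) k := by
  intro f
  obtain ⟨f, rfl⟩ := Polynomial.map_surjective σ hσ f
  simp only [← Polynomial.map_mul, cont_map_s6, ← Ideal.map_pow, ← Ideal.map_mul, h f]

open IsLocalRing in
theorem dmIdentity_iff_forall_of_ker_eq_pow [IsNoetherianRing A] [IsLocalRing A]
    {Q : ℕ → Type*} [∀ s, CommRing (Q s)] (σ : ∀ s, A →+* Q s)
    (hσ : ∀ s, Function.Surjective (σ s)) (hker : ∀ s, RingHom.ker (σ s) = maximalIdeal A ^ s)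
    {g : A[X]} {k : ℕ} (hk : 0 < k) : DMIdentity g k ↔ ∀ s, DMIdentity (g.map (σ s)) k := by
  refine ⟨fun h s ↦ h.map_of_surjective (hσ s), fun h f ↦ ?_⟩
  refine le_antisymm (cont_mul_mul_pow_le f g hk)
    (Ideal.le_of_forall_le_sup_pow (maximalIdeal_le_jacobson _) fun s ↦ ?_)
  have hmap : (cont f ^ k * cont g).map (σ s) = (cont (f * g) * cont f ^ (k - 1)).map (σ s) := by
    simp only [Ideal.map_mul, Ideal.map_pow, ← cont_map_s6, Polynomial.map_mul, h s (f.map (σ s))]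
  rw [← hker, ← Ideal.comap_map_of_surjective' (σ s) (hσ s), ← hmap]
  exact Ideal.le_comap_map

end DedekindMertens

open Finset in
theorem IsPrecomplete.exists_sum_range_sub_mem {S : Type*} [CommRing S] (J : Ideal S)
    [IsPrecomplete J S] (a : ℕ → S) (ha : ∀ n, a n ∈ J ^ n) :
    ∃ s : S, ∀ n, ∑ i ∈ range n, a i - s ∈ J ^ n := by
  have hcauchy {m n : ℕ} (hmn : m ≤ n) : ∑ i ∈ range n, a i - ∑ i ∈ range m, a i ∈ J ^ m := by
    rw [← sum_range_add_sum_Ico a hmn, add_sub_cancel_left]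
    exact sum_mem fun i hi ↦ Ideal.pow_le_pow_right (mem_Ico.mp hi).1 (ha i)
  obtain ⟨s, hs⟩ := IsPrecomplete.prec ‹_› (f := fun n ↦ ∑ i ∈ range n, a i) fun hmn ↦ by
    simpa [SModEq.sub_mem] using neg_mem (hcauchy hmn)
  exact ⟨s, fun n ↦ by simpa [SModEq.sub_mem] using hs n⟩

open Finset in
theorem IsAdicComplete.mem_span_of_forall_exists_sub_mem {S ι : Type*} [CommRing S] [Fintype ι]
    (J : Ideal S) [IsAdicComplete J S] (ξ : ι → S) (K : ℕ → Ideal S) (hK : ∀ t, K t ≤ J ^ t)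
    (hstep : ∀ t, ∀ z ∈ K t, ∃ c : ι → S, (∀ j, c j ∈ J ^ t) ∧ z - ∑ j, c j * ξ j ∈ K (t + 1))
    {x : S} (hx : x ∈ K 0) : x ∈ Ideal.span (Set.range ξ) := by
  choose! c hcJ hcK using hstep
  let z : ℕ → S := fun t ↦ Nat.rec x (fun t zt ↦ zt - ∑ j, c t zt j * ξ j) t
  have hzK (t : ℕ) : z t ∈ K t := by
    induction t with
    | zero => exact hx
    | succ t ih => exact hcK t _ ih
  have hx_eq (t : ℕ) : x = z t + ∑ j, (∑ u ∈ range t, c u (z u) j) * ξ j := by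
    induction t with
    | zero => simp [z]
    | succ t ih =>
      simp only [sum_range_succ, add_mul, sum_add_distrib]
      rw [ih]
      change _ = z t - _ + _
      ring
  choose γ hγ using fun j ↦ IsPrecomplete.exists_sum_range_sub_mem J (fun u ↦ c u (z u) j)
    fun u ↦ hcJ u _ (hzK u) j
  have hlim : x - ∑ j, γ j * ξ j = 0 := by
    refine IsHausdorff.haus' (I := J) _ fun t ↦ ?_
    rw [SModEq.sub_mem, sub_zero, smul_eq_mul, Ideal.mul_top]
    have : x - ∑ j, γ j * ξ j = z t + ∑ j, (∑ u ∈ range t, c u (z u) j - γ j) * ξ j := by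
      conv_lhs => rw [hx_eq t]
      simp only [sub_mul, sum_sub_distrib]
      ring
    rw [this]
    exact add_mem (hK t (hzK t)) (sum_mem fun j _ ↦ Ideal.mul_mem_right _ _ (hγ j t))
  rw [sub_eq_zero.mp hlim]
  exact sum_mem fun j _ ↦ Ideal.mul_mem_left _ _ (Ideal.subset_span ⟨j, rfl⟩)

section NoetherianCriterion

variable {R S : Type*} [CommRing R] [CommRing S] [Algebra R S] {I : Ideal R} {J : Ideal S}

def initialFiltration (hIJ : I.map (algebraMap R S) ≤ J) (L : Ideal S) : I.Filtration R where
  N s := I ^ s ⊓ (L ⊔ J ^ (s + 1)).comap (algebraMap R S)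
  mono s := inf_le_inf (Ideal.pow_le_pow_right s.le_succ)
    (Ideal.comap_mono (sup_le_sup_left (Ideal.pow_le_pow_right (s + 1).le_succ) _))
  smul_le s := Submodule.smul_le.mpr fun a ha r hr ↦ by
    refine ⟨pow_succ' I s ▸ Ideal.mul_mem_mul ha hr.1, ?_⟩
    have hJL : J * (L ⊔ J ^ (s + 1)) ≤ L ⊔ J ^ (s + 1 + 1) := by
      rw [Ideal.mul_sup, ← pow_succ']
      exact sup_le_sup_right Ideal.mul_le_right _
    rw [SetLike.mem_coe, Ideal.mem_comap, smul_eq_mul, map_mul]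
    exact hJL (Ideal.mul_mem_mul (hIJ (Ideal.mem_map_of_mem _ ha)) hr.2)

theorem initialFiltration_stable [IsNoetherianRing R] (hIJ : I.map (algebraMap R S) ≤ J)
    (L : Ideal S) : (initialFiltration hIJ L).Stable :=
  (I.stableFiltration_stable ⊤).of_le fun s ↦ by
    simp [initialFiltration, Ideal.stableFiltration]

variable (hmem : ∀ n r, algebraMap R S r ∈ J ^ n ↔ r ∈ I ^ n)
  (hdense : ∀ n (x : S), ∃ r, x - algebraMap R S r ∈ J ^ n)
include hmem hdense

theorem exists_sub_sum_mul_mem_inf_pow {L : Ideal S} {D p : ℕ} {r : Fin p → R} {ξ : Fin p → S}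
    (hgen : ∀ t, ∀ a ∈ I ^ (D + t), algebraMap R S a ∈ L ⊔ J ^ (D + t + 1) →
      a ∈ I ^ t • Ideal.span (Set.range r))
    (hξL : ∀ j, ξ j ∈ L) (hξ : ∀ j, algebraMap R S (r j) - ξ j ∈ J ^ (D + 1))
    (t : ℕ) (z : S) (hz : z ∈ L ⊓ J ^ (D + t)) :
    ∃ c : Fin p → S, (∀ j, c j ∈ J ^ t) ∧ z - ∑ j, c j * ξ j ∈ L ⊓ J ^ (D + (t + 1)) := by
  obtain ⟨a, ha⟩ := hdense (D + t + 1) z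
  have haJ : algebraMap R S a ∈ J ^ (D + t) := by
    simpa using sub_mem hz.2 (Ideal.pow_le_pow_right (D + t).le_succ ha)
  have haL : algebraMap R S a ∈ L ⊔ J ^ (D + t + 1) :=
    Submodule.mem_sup.mpr ⟨z, hz.1, -(z - algebraMap R S a), neg_mem ha, by ring⟩
  obtain ⟨b, hbI, hb⟩ := (Submodule.mem_ideal_smul_span_iff_exists_sum _ _ _).mp
    (hgen t a ((hmem _ _).mp haJ) haL)
  rw [Finsupp.sum_fintype _ _ (by simp)] at hb
  refine ⟨fun j ↦ algebraMap R S (b j), fun j ↦ (hmem _ _).mpr (hbI j), ?_, ?_⟩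
  · exact sub_mem hz.1 (sum_mem fun j _ ↦ Ideal.mul_mem_left _ _ (hξL j))
  · have hsplit : z - ∑ j, algebraMap R S (b j) * ξ j = (z - algebraMap R S a) +
        ∑ j, algebraMap R S (b j) * (algebraMap R S (r j) - ξ j) := by
      simp only [← hb, map_sum, smul_eq_mul, map_mul, mul_sub, Finset.sum_sub_distrib]
      ring
    rw [hsplit, ← add_assoc]
    refine add_mem ha (sum_mem fun j _ ↦ ?_)
    have := Ideal.mul_mem_mul ((hmem _ _).mpr (hbI j)) (hξ j)
    rwa [← pow_add, show t + (D + 1) = D + t + 1 by omega] at this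

theorem isNoetherianRing_of_isAdicComplete [IsNoetherianRing R] [IsAdicComplete J S] :
    IsNoetherianRing S := by
  have hIJ : I.map (algebraMap R S) ≤ J :=
    Ideal.map_le_iff_le_comap.mpr fun a ha ↦ by simpa using (hmem 1 a).mpr (by simpa using ha)
  refine ⟨fun L ↦ ?_⟩
  set F := initialFiltration hIJ L
  obtain ⟨D, hD⟩ := (initialFiltration_stable hIJ L).exists_pow_smul_eq_of_ge
  obtain ⟨p, r, hr⟩ := Submodule.fg_iff_exists_fin_generating_family.mp
    (IsNoetherian.noetherian (F.N D))
  have hrF (j : Fin p) : r j ∈ F.N D := hr ▸ Submodule.subset_span ⟨j, rfl⟩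
  have hlift (j : Fin p) : ∃ ξ ∈ L, algebraMap R S (r j) - ξ ∈ J ^ (D + 1) := by
    obtain ⟨ξ, hξ, e, he, hsum⟩ := Submodule.mem_sup.mp (hrF j).2
    exact ⟨ξ, hξ, by rwa [← hsum, add_sub_cancel_left]⟩
  choose ξ hξL hξ using hlift
  have hξJ (j : Fin p) : ξ j ∈ J ^ D := by
    have hrJ := (hmem D (r j)).mpr (hrF j).1
    simpa using sub_mem hrJ (Ideal.pow_le_pow_right D.le_succ (hξ j))
  have hgen (t : ℕ) (a : R) (ha : a ∈ I ^ (D + t)) (haL : algebraMap R S a ∈ L ⊔ J ^ (D + t + 1)) :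
      a ∈ I ^ t • Ideal.span (Set.range r) := by
    have := hD (D + t) (by omega)
    rw [Nat.add_sub_cancel_left] at this
    rw [show Ideal.span (Set.range r) = F.N D from hr, ← this]
    exact ⟨ha, haL⟩
  have hspan : L ⊓ J ^ D = Ideal.span (Set.range ξ) := by
    refine le_antisymm (fun x hx ↦ ?_) (Ideal.span_le.mpr ?_)
    · refine IsAdicComplete.mem_span_of_forall_exists_sub_mem J ξ (fun t ↦ L ⊓ J ^ (D + t))
        (fun t ↦ inf_le_right.trans (Ideal.pow_le_pow_right (by omega)))
        (exists_sub_sum_mul_mem_inf_pow hmem hdense hgen hξL hξ) hx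
    · rintro _ ⟨j, rfl⟩
      exact ⟨hξL j, hξJ j⟩
  have : IsNoetherianRing (S ⧸ J ^ D) := by
    refine isNoetherianRing_of_surjective R _ ((Ideal.Quotient.mk _).comp (algebraMap R S)) ?_
    rintro ⟨x⟩
    obtain ⟨a, ha⟩ := hdense D x
    exact ⟨a, Ideal.Quotient.eq.mpr (by simpa using neg_mem ha)⟩
  refine Ideal.fg_of_fg_map_of_fg_inf_ker_of_surjective (f := Ideal.Quotient.mk (J ^ D))
    (IsNoetherian.noetherian _) ?_ Ideal.Quotient.mk_surjective
  rw [Ideal.mk_ker, hspan]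
  exact Submodule.fg_span (Set.finite_range ξ)

end NoetherianCriterion

namespace AdicCompletion

open IsLocalRing

theorem evalₐ_algebraMap {R : Type*} [CommRing R] (I : Ideal R) (n : ℕ) (r : R) :
    evalₐ I n (algebraMap R (AdicCompletion I R) r) = Ideal.Quotient.mk (I ^ n) r :=
  (evalₐ I n).commutes r

variable {R : Type*} [CommRing R] [IsNoetherianRing R] [IsLocalRing R]

theorem ker_evalₐ_maximalIdeal (n : ℕ) :
    RingHom.ker (evalₐ (maximalIdeal R) n) =
      maximalIdeal (AdicCompletion (maximalIdeal R) R) ^ n := by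
  ext x
  rw [RingHom.mem_ker, maximalIdeal_eq_map, ← Ideal.map_pow, ← Submodule.restrictScalars_mem R,
    ← Ideal.smul_top_eq_map, pow_smul_top_eq_ker_eval (maximalIdeal R).fg_of_isNoetherianRing,
    LinearMap.mem_ker, ← factor_eval_eq_evalₐ _ _ (by simp)]
  obtain ⟨r, hr⟩ := Ideal.Quotient.mk_surjective (x.val n)
  simp [eval, ← hr, Ideal.Quotient.eq_zero_iff_mem]

instance : IsNoetherianRing (AdicCompletion (maximalIdeal R) R) := by
  refine isNoetherianRing_of_isAdicComplete (I := maximalIdeal R)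
    (J := maximalIdeal (AdicCompletion (maximalIdeal R) R)) (fun n r ↦ ?_) (fun n x ↦ ?_)
  · rw [← ker_evalₐ_maximalIdeal, RingHom.mem_ker, evalₐ_algebraMap,
      Ideal.Quotient.eq_zero_iff_mem]
  · obtain ⟨r, hr⟩ := Ideal.Quotient.mk_surjective (evalₐ (maximalIdeal R) n x)
    refine ⟨r, ?_⟩
    rw [← ker_evalₐ_maximalIdeal, RingHom.mem_ker, map_sub, evalₐ_algebraMap, hr, sub_self]

end AdicCompletion

/-- Proposition 4.1 (Dedekind--Mertens part): the Dedekind--Mertens number of `g` over a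
Noetherian local ring `R` equals the Dedekind--Mertens number of `g` over the
`m`-adic completion of `R`. -/
theorem dmNumber_completion {R : Type*} [CommRing R] [IsNoetherianRing R] [IsLocalRing R]
    (g : R[X]) :
    dmNumber R g =
      dmNumber (AdicCompletion (IsLocalRing.maximalIdeal R) R)
        (g.map (algebraMap R (AdicCompletion (IsLocalRing.maximalIdeal R) R))) := by
  set m := IsLocalRing.maximalIdeal R
  let σ (s : ℕ) : AdicCompletion m R →+* R ⧸ m ^ s := AdicCompletion.evalₐ m s
  have hσ (s : ℕ) : (g.map (algebraMap R _)).map (σ s) = g.map (Ideal.Quotient.mk (m ^ s)) := by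
    rw [Polynomial.map_map]
    rfl
  show sInf {k | 0 < k ∧ DMIdentity g k} = sInf {k | 0 < k ∧ DMIdentity (g.map _) k}
  congr 1
  ext k
  refine and_congr_right fun hk ↦ ?_
  rw [dmIdentity_iff_forall_of_ker_eq_pow _ (fun _ ↦ Ideal.Quotient.mk_surjective)
      (fun _ ↦ Ideal.mk_ker) hk,
    dmIdentity_iff_forall_of_ker_eq_pow σ (AdicCompletion.surjective_evalₐ m)
      AdicCompletion.ker_evalₐ_maximalIdeal hk]
  simp only [hσ, m]
end

section
/- Let F be a field, R = F[[s^3, s^4]], and let I, J be nonzero ideals of R with μ_R(I) = 3. Then μ_R(IJ) = 3, and hence IJ is integrally closed. -/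
open Polynomial
set_option synthInstance.maxHeartbeats 1000000

/-!
Every nonzero element of `R` has its order in the semigroup `⟨3, 4⟩ = ℕ \ {1, 2, 5}`, and `R`
contains the conductor `s⁶F[[s]]`. Let `n` be the least order of an element of a nonzero ideal `I`.
Cancelling leading terms shows that `I` is generated by an element of order `n` and at most one
element of order `n + 1`, `n + 2` or `n + 5`, unless `I` has elements of orders `n`, `n + 1` and
`n + 2`; in that case `n ≥ 6` and `I = sⁿF[[s]] ∩ R`. So `μ(I) = 3` forces `I = sⁿF[[s]]` with
`n ≥ 6`, and then `IJ = sⁿ⁺ᵐF[[s]]` for the least order `m` in `J`: an element of order `≥ n + m`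
is a multiple of a minimal element of `J` by a series of order `≥ n ≥ 6`, which lies in `R`.
Ideals `sᴺF[[s]]`, `N ≥ 6`, are contracted from `F[[s]]` and need exactly three generators,
because their coefficients at `N`, `N + 1`, `N + 2` see only the constant coefficient of a
multiplier from `R`.
-/

theorem mug_le_of_span_eq {A : Type*} [CommRing A] {I : Ideal A} {k : ℕ} (x : Fin k → A)
    (hx : Ideal.span (Set.range x) = I) : mug I ≤ k :=
  Nat.sInf_le ⟨x, hx⟩

namespace PowerSeries

section Semiring

variable {A : Type*} [Semiring A] {φ : A⟦X⟧}

theorem X_pow_dvd_iff_le_order {n : ℕ} : (X : A⟦X⟧) ^ n ∣ φ ↔ (n : ℕ∞) ≤ φ.order := by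
  rw [X_pow_dvd_iff]
  exact ⟨nat_le_order φ n, fun h i hi => coeff_of_lt_order i ((Nat.cast_lt.2 hi).trans_le h)⟩

theorem X_pow_succ_dvd_or_order_eq {m : ℕ} (h : (X : A⟦X⟧) ^ m ∣ φ) :
    (X : A⟦X⟧) ^ (m + 1) ∣ φ ∨ φ.order = m := by
  rw [X_pow_dvd_iff_le_order] at h ⊢
  rcases h.eq_or_lt with h | h
  · exact Or.inr h.symm
  · exact Or.inl (by simpa using Order.add_one_le_of_lt h)

theorem exists_eq_X_pow_mul_of_order_eq {d : ℕ} (h : φ.order = d) :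
    ∃ u : A⟦X⟧, φ = X ^ d * u ∧ constantCoeff u ≠ 0 := by
  have hφ : φ ≠ 0 := by rintro rfl; simp at h
  have hd : φ.order.toNat = d := by simp [h]
  refine ⟨divXPowOrder φ, ?_, ?_⟩
  · rw [← hd, X_pow_order_mul_divXPowOrder]
  · rw [constantCoeff_divXPowOrder]
    exact coeff_order hφ

end Semiring

variable {F : Type*} [Field F]

theorem exists_eq_mul_of_order_eq {g h : F⟦X⟧} {d k : ℕ} (hg : g.order = d)
    (hh : X ^ (d + k) ∣ h) : ∃ q : F⟦X⟧, X ^ k ∣ q ∧ h = q * g := by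
  obtain ⟨u, rfl, hu⟩ := exists_eq_X_pow_mul_of_order_eq hg
  obtain ⟨w, rfl⟩ := hh
  refine ⟨X ^ k * (w * u⁻¹), dvd_mul_right _ _, ?_⟩
  calc X ^ (d + k) * w
      = X ^ (d + k) * w * (u⁻¹ * u) := by rw [PowerSeries.inv_mul_cancel u hu, mul_one]
    _ = X ^ k * (w * u⁻¹) * (X ^ d * u) := by ring

theorem exists_X_pow_succ_dvd_sub_C_mul {g h : F⟦X⟧} {d e : ℕ} (hg : g.order = d)
    (hh : X ^ (d + e) ∣ h) : ∃ c : F, X ^ (d + e + 1) ∣ h - C c * X ^ e * g := by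
  obtain ⟨u, rfl, hu⟩ := exists_eq_X_pow_mul_of_order_eq hg
  obtain ⟨w, rfl⟩ := hh
  refine ⟨constantCoeff w / constantCoeff u, ?_⟩
  have : X ^ (d + e) * w - C (constantCoeff w / constantCoeff u) * X ^ e * (X ^ d * u) =
      X ^ (d + e) * (w - C (constantCoeff w / constantCoeff u) * u) := by ring
  rw [this, pow_succ]
  refine mul_dvd_mul_left _ (X_dvd_iff.2 ?_)
  simp [hu]

variable (R : Subring F⟦X⟧)

noncomputable def xPowIdeal (N : ℕ) : Ideal R := (Ideal.span {(X : F⟦X⟧) ^ N}).comap R.subtype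

variable {R}

theorem mem_xPowIdeal {N : ℕ} {x : R} : x ∈ xPowIdeal R N ↔ (N : ℕ∞) ≤ (x : F⟦X⟧).order := by
  rw [xPowIdeal, Ideal.mem_comap, Ideal.mem_span_singleton, ← X_pow_dvd_iff_le_order]
  rfl

theorem exists_order_eq_le_xPowIdeal (J : Ideal R) (hJ : J ≠ ⊥) :
    ∃ m : ℕ, (∃ y ∈ J, (y : F⟦X⟧).order = m) ∧ J ≤ xPowIdeal R m := by
  classical
  have hex : ∃ m : ℕ, ∃ y ∈ J, (y : F⟦X⟧).order = m := by
    obtain ⟨y, hyJ, hy⟩ := Submodule.exists_mem_ne_zero_of_ne_bot hJ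
    refine ⟨_, y, hyJ, (coe_toNat_order ?_).symm⟩
    exact_mod_cast hy
  refine ⟨Nat.find hex, Nat.find_spec hex, fun y hy => mem_xPowIdeal.2 ?_⟩
  by_cases hy0 : (y : F⟦X⟧) = 0
  · simp [hy0]
  rw [← coe_toNat_order hy0, Nat.cast_le]
  exact Nat.find_min' hex ⟨y, hy, (coe_toNat_order hy0).symm⟩

namespace S3S4

variable (hR : ∀ f : F⟦X⟧, f ∈ R ↔ coeff 1 f = 0 ∧ coeff 2 f = 0 ∧ coeff 5 f = 0)
include hR

theorem mem_of_X_pow_six_dvd {f : F⟦X⟧} (hf : X ^ 6 ∣ f) : f ∈ R := by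
  rw [X_pow_dvd_iff] at hf
  exact (hR f).2 ⟨hf 1 (by norm_num), hf 2 (by norm_num), hf 5 (by norm_num)⟩

theorem C_mul_X_pow_mem (c : F) {e : ℕ} (h1 : e ≠ 1) (h2 : e ≠ 2) (h5 : e ≠ 5) :
    C c * X ^ e ∈ R :=
  (hR _).2 (by simp [h1.symm, h2.symm, h5.symm])

theorem order_ne_one_two_five {x : R} {m : ℕ} (hx : (x : F⟦X⟧).order = m) :
    m ≠ 1 ∧ m ≠ 2 ∧ m ≠ 5 := by
  have hm := (order_eq_nat.1 hx).1
  obtain ⟨h1, h2, h5⟩ := (hR x).1 x.2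
  refine ⟨?_, ?_, ?_⟩ <;> rintro rfl <;> contradiction

theorem X_pow_three_dvd_sub_C {x : F⟦X⟧} (hx : x ∈ R) : X ^ 3 ∣ x - C (constantCoeff x) := by
  obtain ⟨h1, h2, -⟩ := (hR x).1 hx
  rw [X_pow_dvd_iff]
  intro i hi
  interval_cases i <;> simp [h1, h2]

theorem coeff_mul_of_le_order {N j : ℕ} (hj : j < 3) {c y : F⟦X⟧} (hc : c ∈ R)
    (hy : (N : ℕ∞) ≤ y.order) : coeff (N + j) (c * y) = constantCoeff c * coeff (N + j) y := by
  have hrest : X ^ (N + 3) ∣ (c - C (constantCoeff c)) * y := by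
    rw [pow_add, mul_comm (X ^ N)]
    exact mul_dvd_mul (X_pow_three_dvd_sub_C hR hc) (X_pow_dvd_iff_le_order.2 hy)
  have h0 := X_pow_dvd_iff.1 hrest (N + j) (by omega)
  rw [sub_mul, map_sub, coeff_C_mul, sub_eq_zero] at h0
  exact h0

/-- Cancelling leading terms by `C c * X ^ e * g` with `e ∈ ⟨3, 4⟩` raises the order, and once it
reaches `d₀ + 6` the conductor makes the element a multiple of `g₀`: the induction is finite. -/
theorem span_eq_of_orders {I : Ideal R} {s : Set R} (hs : s ⊆ I) {g₀ : R} (hg₀ : g₀ ∈ s)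
    {d₀ : ℕ} (hd₀ : (g₀ : F⟦X⟧).order = d₀)
    (hcover : ∀ h ∈ I, ∀ m : ℕ, (h : F⟦X⟧).order = m →
      ∃ g ∈ s, ∃ d e : ℕ, (g : F⟦X⟧).order = d ∧ m = d + e ∧ e ≠ 1 ∧ e ≠ 2 ∧ e ≠ 5) :
    Ideal.span s = I := by
  refine le_antisymm (Ideal.span_le.2 hs) fun h hh => ?_
  suffices ∀ k m, d₀ + 6 ≤ m + k → ∀ h ∈ I, X ^ m ∣ (h : F⟦X⟧) → h ∈ Ideal.span s from
    this (d₀ + 6) 0 (by omega) h hh (by simp)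
  intro k
  induction k with
  | zero =>
    intro m hm h _ hdvd
    obtain ⟨q, hq, hhq⟩ :=
      exists_eq_mul_of_order_eq hd₀ ((pow_dvd_pow X (by omega : d₀ + 6 ≤ m)).trans hdvd)
    rw [show h = ⟨q, mem_of_X_pow_six_dvd hR hq⟩ * g₀ from Subtype.ext hhq]
    exact Ideal.mul_mem_left _ _ (Ideal.subset_span hg₀)
  | succ k ih =>
    intro m hm h hh hdvd
    rcases X_pow_succ_dvd_or_order_eq hdvd with hdvd' | hord
    · exact ih (m + 1) (by omega) h hh hdvd'
    obtain ⟨g, hgs, d, e, hgd, rfl, he1, he2, he5⟩ := hcover h hh m hord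
    obtain ⟨c, hc⟩ := exists_X_pow_succ_dvd_sub_C_mul hgd hdvd
    let r : R := ⟨C c * X ^ e, C_mul_X_pow_mem hR c he1 he2 he5⟩
    have hrest : h - r * g ∈ Ideal.span s :=
      ih (d + e + 1) (by omega) _ (I.sub_mem hh (I.mul_mem_left r (hs hgs))) hc
    simpa using add_mem hrest (Ideal.mul_mem_left _ r (Ideal.subset_span hgs))

theorem span_eq_xPowIdeal {N : ℕ} {g₀ g₁ g₂ : R} (h₀ : (g₀ : F⟦X⟧).order = N)
    (h₁ : (g₁ : F⟦X⟧).order = ↑(N + 1)) (h₂ : (g₂ : F⟦X⟧).order = ↑(N + 2)) :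
    Ideal.span {g₀, g₁, g₂} = xPowIdeal R N := by
  refine span_eq_of_orders hR ?_ (Set.mem_insert _ _) h₀ fun h hh m hm => ?_
  · simp only [Set.insert_subset_iff, Set.singleton_subset_iff, SetLike.mem_coe, mem_xPowIdeal,
      h₀, h₁, h₂, Nat.cast_le]
    omega
  have hNm : N ≤ m := by exact_mod_cast hm ▸ mem_xPowIdeal.1 hh
  obtain ⟨q, r, hr, rfl⟩ : ∃ q r, r < 3 ∧ m = N + r + 3 * q :=
    ⟨(m - N) / 3, (m - N) % 3, Nat.mod_lt _ (by norm_num), by omega⟩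
  interval_cases r
  · exact ⟨g₀, by simp, N, 3 * q, h₀, by omega, by omega, by omega, by omega⟩
  · exact ⟨g₁, by simp, N + 1, 3 * q, h₁, by omega, by omega, by omega, by omega⟩
  · exact ⟨g₂, by simp, N + 2, 3 * q, h₂, by omega, by omega, by omega, by omega⟩

theorem exists_span_eq_xPowIdeal {N : ℕ} (hN : 6 ≤ N) :
    ∃ x : Fin 3 → R, Ideal.span (Set.range x) = xPowIdeal R N := by
  have hX : ∀ j : ℕ, (X : F⟦X⟧) ^ (N + j) ∈ R := fun j =>
    mem_of_X_pow_six_dvd hR (pow_dvd_pow X (by omega))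
  refine ⟨![⟨_, hX 0⟩, ⟨_, hX 1⟩, ⟨_, hX 2⟩], ?_⟩
  rw [Matrix.range_cons, Matrix.range_cons, Matrix.range_cons, Matrix.range_empty]
  simp only [Set.union_empty, Set.singleton_union]
  exact span_eq_xPowIdeal hR (order_X_pow _) (order_X_pow _) (order_X_pow _)

theorem three_le_of_span_eq_xPowIdeal {N k : ℕ} (hN : 6 ≤ N) (x : Fin k → R)
    (hx : Ideal.span (Set.range x) = xPowIdeal R N) : 3 ≤ k := by
  let φ : F⟦X⟧ → Fin 3 → F := fun y j => coeff (N + j) y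
  let w : Fin k → Fin 3 → F := fun i => φ (x i)
  have hφ : ∀ y ∈ xPowIdeal R N, φ y ∈ Submodule.span F (Set.range w) := by
    intro y hy
    rw [← hx] at hy
    induction hy using Submodule.span_induction with
    | mem _ hy =>
      obtain ⟨i, rfl⟩ := hy
      exact Submodule.subset_span ⟨i, rfl⟩
    | zero => exact (Submodule.span F (Set.range w)).zero_mem
    | add a b _ _ ha hb =>
      convert add_mem ha hb using 1
      ext j
      simp [φ]
    | smul c y hy ih =>
      convert Submodule.smul_mem _ (constantCoeff (c : F⟦X⟧)) ih using 1
      ext j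
      have hy' : y ∈ xPowIdeal R N := hx ▸ hy
      exact coeff_mul_of_le_order hR j.2 c.2 (mem_xPowIdeal.1 hy')
  have htop : Submodule.span F (Set.range w) = ⊤ := by
    refine eq_top_iff.2 fun v _ => ?_
    let y : F⟦X⟧ := X ^ N * mk fun i => if h : i < 3 then v ⟨i, h⟩ else 0
    have hy : X ^ N ∣ y := dvd_mul_right _ _
    have hyR : y ∈ R := mem_of_X_pow_six_dvd hR ((pow_dvd_pow X hN).trans hy)
    convert hφ ⟨y, hyR⟩ (mem_xPowIdeal.2 (X_pow_dvd_iff_le_order.1 hy))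
    ext j
    simp [φ, y, add_comm N]
  have := finrank_range_le_card (R := F) w
  rwa [Set.finrank, htop, finrank_top, Module.finrank_fin_fun, Fintype.card_fin] at this

theorem mug_xPowIdeal {N : ℕ} (hN : 6 ≤ N) : mug (xPowIdeal R N) = 3 := by
  obtain ⟨x, hx⟩ := exists_span_eq_xPowIdeal hR hN
  exact le_antisymm (mug_le_of_span_eq x hx)
    (le_csInf ⟨3, x, hx⟩ fun k ⟨y, hy⟩ => three_le_of_span_eq_xPowIdeal hR hN y hy)

theorem eq_xPowIdeal_of_consecutive_orders {I : Ideal R} {n : ℕ} (hIn : I ≤ xPowIdeal R n)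
    {g₀ g₁ g₂ : R} (hg₀I : g₀ ∈ I) (hg₁I : g₁ ∈ I) (hg₂I : g₂ ∈ I)
    (hg₀ : (g₀ : F⟦X⟧).order = n) (hg₁ : (g₁ : F⟦X⟧).order = ↑(n + 1))
    (hg₂ : (g₂ : F⟦X⟧).order = ↑(n + 2)) : 6 ≤ n ∧ I = xPowIdeal R n := by
  refine ⟨?_, le_antisymm hIn ?_⟩
  · have := order_ne_one_two_five hR hg₀
    have := order_ne_one_two_five hR hg₁
    have := order_ne_one_two_five hR hg₂
    omega
  · rw [← span_eq_xPowIdeal hR hg₀ hg₁ hg₂, Ideal.span_le]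
    simp [Set.insert_subset_iff, hg₀I, hg₁I, hg₂I]

theorem exists_span_pair_eq_of_gap {I : Ideal R} {n : ℕ} (hIn : I ≤ xPowIdeal R n) {g₀ : R}
    (hg₀I : g₀ ∈ I) (hg₀ : (g₀ : F⟦X⟧).order = n)
    (hgap : ¬ ((∃ g ∈ I, (g : F⟦X⟧).order = ↑(n + 1)) ∧ ∃ g ∈ I, (g : F⟦X⟧).order = ↑(n + 2))) :
    ∃ a b : R, Ideal.span {a, b} = I := by
  let V : ℕ → Prop := fun m => ∃ g ∈ I, (g : F⟦X⟧).order = m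
  have hV : ∀ k, ¬ V (n + k) → ∀ h ∈ I, ∀ m : ℕ, (h : F⟦X⟧).order = m → m ≠ n + k :=
    fun k hk h hh m hm hmk => hk ⟨h, hh, hmk ▸ hm⟩
  suffices ∃ g ∈ I, ∃ d : ℕ, (g : F⟦X⟧).order = d ∧ ∀ h ∈ I, ∀ m : ℕ,
      (h : F⟦X⟧).order = m → n ≤ m →
        (m - n ≠ 1 ∧ m - n ≠ 2 ∧ m - n ≠ 5) ∨ (d ≤ m ∧ m - d ≠ 1 ∧ m - d ≠ 2 ∧ m - d ≠ 5) by
    obtain ⟨g, hgI, d, hgd, hcover⟩ := this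
    refine ⟨g₀, g, span_eq_of_orders hR ?_ (Set.mem_insert _ _) hg₀ fun h hh m hm => ?_⟩
    · simp [Set.insert_subset_iff, hg₀I, hgI]
    have hnm : n ≤ m := by exact_mod_cast hm ▸ mem_xPowIdeal.1 (hIn hh)
    rcases hcover h hh m hm hnm with h₀ | h₁
    · exact ⟨g₀, by simp, n, m - n, hg₀, by omega, h₀⟩
    · exact ⟨g, by simp, d, m - d, hgd, by omega, h₁.2⟩
  by_cases h₁ : V (n + 1)
  · obtain ⟨g, hgI, hg⟩ := h₁
    have h₂ := hV 2 fun h₂ => hgap ⟨⟨g, hgI, hg⟩, h₂⟩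
    exact ⟨g, hgI, n + 1, hg, fun h hh m hm hnm => by have := h₂ h hh m hm; omega⟩
  have h₁ := hV 1 h₁
  by_cases h₂ : V (n + 2)
  · obtain ⟨g, hgI, hg⟩ := h₂
    exact ⟨g, hgI, n + 2, hg, fun h hh m hm hnm => by have := h₁ h hh m hm; omega⟩
  have h₂ := hV 2 h₂
  by_cases h₅ : V (n + 5)
  · obtain ⟨g, hgI, hg⟩ := h₅
    exact ⟨g, hgI, n + 5, hg, fun h hh m hm hnm => by
      have := h₁ h hh m hm; have := h₂ h hh m hm; omega⟩
  have h₅ := hV 5 h₅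
  exact ⟨g₀, hg₀I, n, hg₀, fun h hh m hm hnm => by
    have := h₁ h hh m hm; have := h₂ h hh m hm; have := h₅ h hh m hm; omega⟩

theorem eq_xPowIdeal_of_three_le_mug {I : Ideal R} (hI : 3 ≤ mug I) :
    ∃ n, 6 ≤ n ∧ I = xPowIdeal R n := by
  have hI0 : I ≠ ⊥ := by
    rintro rfl
    have := mug_le_of_span_eq (I := ⊥) (Fin.elim0 : Fin 0 → R) (by simp)
    omega
  obtain ⟨n, ⟨g₀, hg₀I, hg₀⟩, hIn⟩ := exists_order_eq_le_xPowIdeal I hI0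
  by_cases hgap : (∃ g ∈ I, (g : F⟦X⟧).order = ↑(n + 1)) ∧ ∃ g ∈ I, (g : F⟦X⟧).order = ↑(n + 2)
  · obtain ⟨⟨g₁, hg₁I, hg₁⟩, ⟨g₂, hg₂I, hg₂⟩⟩ := hgap
    exact ⟨n, eq_xPowIdeal_of_consecutive_orders hR hIn hg₀I hg₁I hg₂I hg₀ hg₁ hg₂⟩
  obtain ⟨a, b, hab⟩ := exists_span_pair_eq_of_gap hR hIn hg₀I hg₀ hgap
  have := mug_le_of_span_eq ![a, b] (by simpa [Matrix.range_cons, Set.pair_comm] using hab)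
  omega

theorem xPowIdeal_mul {n m : ℕ} (hn : 6 ≤ n) {J : Ideal R} {y₀ : R} (hy₀J : y₀ ∈ J)
    (hy₀ : (y₀ : F⟦X⟧).order = m) (hJm : J ≤ xPowIdeal R m) :
    xPowIdeal R n * J = xPowIdeal R (n + m) := by
  refine le_antisymm (Ideal.mul_le.2 fun x hx y hy => ?_) fun x hx => ?_
  · rw [mem_xPowIdeal, ← X_pow_dvd_iff_le_order] at hx ⊢
    rw [Subring.coe_mul, pow_add]
    exact mul_dvd_mul hx (X_pow_dvd_iff_le_order.2 (mem_xPowIdeal.1 (hJm hy)))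
  · rw [mem_xPowIdeal, ← X_pow_dvd_iff_le_order, add_comm] at hx
    obtain ⟨q, hq, hxq⟩ := exists_eq_mul_of_order_eq hy₀ hx
    have hqR : q ∈ R := mem_of_X_pow_six_dvd hR ((pow_dvd_pow X hn).trans hq)
    rw [show x = ⟨q, hqR⟩ * y₀ from Subtype.ext hxq]
    exact Ideal.mul_mem_mul (mem_xPowIdeal.2 (X_pow_dvd_iff_le_order.1 hq)) hy₀J

end S3S4

end PowerSeries

open PowerSeries PowerSeries.S3S4 in
theorem mug_mul_s3s4_general {F : Type*} [Field F] (R : Subring (PowerSeries F))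
    (hR : ∀ f : PowerSeries F, f ∈ R ↔
      PowerSeries.coeff (R := F) 1 f = 0 ∧ PowerSeries.coeff (R := F) 2 f = 0 ∧ PowerSeries.coeff (R := F) 5 f = 0)
    (I J : Ideal ↥R) (hJ : J ≠ ⊥) (hmuI : mug I = 3) :
    mug (I * J) = 3 ∧ I * J = Ideal.comap R.subtype (Ideal.map R.subtype (I * J)) := by
  obtain ⟨n, hn, rfl⟩ := eq_xPowIdeal_of_three_le_mug hR hmuI.ge
  obtain ⟨m, ⟨y₀, hy₀J, hy₀⟩, hJm⟩ := exists_order_eq_le_xPowIdeal J hJ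
  rw [xPowIdeal_mul hR hn hy₀J hy₀ hJm]
  exact ⟨mug_xPowIdeal hR (by omega), (Ideal.comap_map_comap _ _).symm⟩

/-- Fact (3) for `R = F[[s³,s⁴]]`: if `I`, `J` are nonzero ideals of `R` and
`μ_R(I) = 3`, then `μ_R(IJ) = 3` and `IJ` is integrally closed
(`IJ = IJ·F[[s]] ∩ R`). -/
theorem mug_mul_s3s4 {F : Type*} [Field F] (R : Subring (PowerSeries F))
    (hR : ∀ f : PowerSeries F, f ∈ R ↔
      PowerSeries.coeff (R := F) 1 f = 0 ∧ PowerSeries.coeff (R := F) 2 f = 0 ∧ PowerSeries.coeff (R := F) 5 f = 0)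
    (I J : Ideal ↥R) (hI : I ≠ ⊥) (hJ : J ≠ ⊥) (hmuI : mug I = 3) :
    mug (I * J) = 3 ∧ I * J = Ideal.comap R.subtype (Ideal.map R.subtype (I * J)) :=
  mug_mul_s3s4_general R hR I J hJ hmuI
end

section
/- Let F be a field, R = F[[s^3, s^4]], g' = s^6 + s^7 t + s^8 t^2, and f = s^6 − s^7 t, all in R[t]. Then fg' = s^{12} − s^{15} t^3, c(fg') = s^{12}R, and c(fg')·c(f) = (s^{18}, s^{19})R is strictly contained in c(f)^2·c(g') = (s^{18}, s^{19}, s^{20})R. Hence μ_R(g') ≥ 3 (in fact μ_R(g') = 3). -/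
/-!
In `R` the elements `a k = s^k` multiply by adding exponents and `s³ ∈ R`, so every content
ideal in sight is a monomial ideal that can be computed by hand, and `s²⁰ ∉ (s¹⁸, s¹⁹)` because
no element of `R` has an `s` or `s²` term. Hence `c(fg')c(f) ≠ c(f)²c(g')`, and `μ_R(g') > 2`
since the Dedekind–Mertens identity for one exponent implies it for every larger one.

The bound `μ_R(g') ≤ 3` is the Dedekind–Mertens lemma for `deg g ≤ 2`: a generator
`fᵢ fⱼ fₖ gₗ` of `c(f)³c(g)` is rewritten modulo `c(fg)c(f)²` with the convolution identity
`(fg)ₘ = g₀ fₘ + g₁ fₘ₋₁ + g₂ fₘ₋₂` until one of its factors is a vanishing coefficient of `f`.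
-/

open Polynomial
set_option synthInstance.maxHeartbeats 1000000

namespace Ideal

variable {α : Type*} [CommSemiring α]

theorem span_insert_eq_span {x : α} {s : Set α} (h : x ∈ span s) :
    span (insert x s) = span s :=
  Submodule.span_insert_eq_span h

theorem span_singleton_mul_span_pair (x y z : α) :
    span {x} * span {y, z} = span {x * y, x * z} := by
  rw [span_mul_span', Set.singleton_mul, Set.image_pair]

end Ideal

namespace Polynomial

variable {A : Type*} [CommRing A]

theorem coeff_mem_cont (p : A[X]) (n : ℕ) : p.coeff n ∈ cont p :=
  Ideal.subset_span ⟨n, rfl⟩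

theorem cont_eq_contentIdeal (p : A[X]) : cont p = p.contentIdeal := by
  refine le_antisymm (Ideal.span_le.mpr ?_) (Ideal.span_le.mpr ?_)
  · rintro _ ⟨n, rfl⟩
    exact p.coeff_mem_contentIdeal n
  · intro x hx
    obtain ⟨n, -, rfl⟩ := mem_coeffs_iff.mp hx
    exact coeff_mem_cont p n

theorem cont_mul_le (f g : A[X]) : cont (f * g) ≤ cont f * cont g := by
  simpa only [cont_eq_contentIdeal] using contentIdeal_mul_le_mul_contentIdeal (p := f) g

theorem cont_C_sub_C_mul_X_pow (b₀ b₁ : A) {n : ℕ} (hn : n ≠ 0) :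
    cont (C b₀ - C b₁ * X ^ n) = Ideal.span {b₀, b₁} := by
  refine le_antisymm (Ideal.span_le.mpr ?_) (Ideal.span_le.mpr ?_)
  · rintro _ ⟨m, rfl⟩
    simp only [coeff_sub, coeff_C, coeff_C_mul, coeff_X_pow]
    have h₀ : b₀ ∈ Ideal.span {b₀, b₁} := Ideal.subset_span (by simp)
    have h₁ : b₁ ∈ Ideal.span {b₀, b₁} := Ideal.subset_span (by simp)
    split_ifs <;> simp [h₀, h₁, sub_mem h₀ h₁]
  · have h₀ := coeff_mem_cont (C b₀ - C b₁ * X ^ n) 0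
    have h₁ := neg_mem (coeff_mem_cont (C b₀ - C b₁ * X ^ n) n)
    simp only [coeff_sub, coeff_C, coeff_C_mul, coeff_X_pow, hn, Ne.symm hn, ↓reduceIte,
      mul_zero, mul_one, sub_zero, zero_sub, neg_neg] at h₀ h₁
    simpa [Set.insert_subset_iff] using ⟨h₀, h₁⟩

theorem cont_eq_span_image_range {p : A[X]} {n : ℕ} (hp : p.natDegree < n) :
    cont p = Ideal.span (p.coeff '' ↑(Finset.range n)) := by
  refine le_antisymm (Ideal.span_le.mpr ?_) (Ideal.span_mono (Set.image_subset_range _ _))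
  rintro _ ⟨m, rfl⟩
  by_cases hm : m < n
  · exact Ideal.subset_span ⟨m, by simpa using hm, rfl⟩
  · rw [coeff_eq_zero_of_natDegree_lt (by omega)]
    exact zero_mem _

theorem cont_C_add_C_mul_X_add_C_mul_X_sq (b₀ b₁ b₂ : A) :
    cont (C b₀ + C b₁ * X + C b₂ * X ^ 2) = Ideal.span {b₀, b₁, b₂} := by
  rw [cont_eq_span_image_range (n := 3) (by compute_degree!)]
  congr 1
  ext
  simp [Finset.range_add_one, coeff_X, or_comm, or_left_comm, eq_comm]

def coeffInt (p : A[X]) (i : ℤ) : A := if 0 ≤ i then p.coeff i.toNat else 0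

@[simp]
theorem coeffInt_natCast (p : A[X]) (n : ℕ) : p.coeffInt n = p.coeff n := by
  simp [coeffInt]

theorem coeffInt_of_neg (p : A[X]) {i : ℤ} (hi : i < 0) : p.coeffInt i = 0 := by
  simp [coeffInt, hi.not_ge]

theorem coeffInt_of_natDegree_lt (p : A[X]) {i : ℤ} (hi : p.natDegree < i) :
    p.coeffInt i = 0 := by
  unfold coeffInt
  split_ifs
  · exact coeff_eq_zero_of_natDegree_lt (by omega)
  · rfl

theorem coeffInt_mem_cont (p : A[X]) (i : ℤ) : p.coeffInt i ∈ cont p := by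
  unfold coeffInt
  split_ifs
  · exact coeff_mem_cont p _
  · exact zero_mem _

theorem coeffInt_mul_of_natDegree_le_two {g : A[X]} (hg : g.natDegree ≤ 2) (f : A[X]) (m : ℤ) :
    (f * g).coeffInt m = g.coeff 0 * f.coeffInt m + g.coeff 1 * f.coeffInt (m - 1) +
      g.coeff 2 * f.coeffInt (m - 2) := by
  have hfg : f * g =
      f * C (g.coeff 0) + f * C (g.coeff 1) * X ^ 1 + f * C (g.coeff 2) * X ^ 2 := by
    conv_lhs => rw [g.as_sum_range' 3 (by omega)]
    simp only [← C_mul_X_pow_eq_monomial, Finset.sum_range_succ, Finset.range_one,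
      Finset.sum_singleton, pow_zero, mul_one, pow_one]
    ring
  unfold coeffInt
  rw [hfg]
  have h1 : m.toNat - 1 = (m - 1).toNat := by omega
  have h2 : m.toNat - 2 = (m - 2).toNat := by omega
  simp only [coeff_add, coeff_mul_C, coeff_mul_X_pow', h1, h2]
  split_ifs <;> first | omega | ring

/- The term is rewritten with the convolution identity at `k`, `j + 1` or `i + 2` (for `l = 0, 1,
2`). On the new terms, re-sorted, `i - j - 3k + 2[l = 0]` is larger, and it is at most
`f.natDegree + 2` unless `k < 0` or `f.natDegree < i`, where the term vanishes. -/
theorem coeffInt_mul_coeffInt_mul_coeffInt_mul_coeff_mem {f g : A[X]} (hg : g.natDegree ≤ 2)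
    (l : ℕ) {i j k : ℤ} (hkj : k ≤ j) (hji : j ≤ i) :
    f.coeffInt i * f.coeffInt j * f.coeffInt k * g.coeff l ∈ cont (f * g) * cont f ^ 2 := by
  rcases lt_or_ge k 0 with hk | hk
  · simp [coeffInt_of_neg _ hk]
  rcases lt_or_ge (f.natDegree : ℤ) i with hi | hi
  · simp [coeffInt_of_natDegree_lt _ hi]
  have hconv (m n p : ℤ) (hn : n = m - 1) (hp : p = m - 2) := hn ▸ hp ▸
    coeffInt_mul_of_natDegree_le_two hg f m
  have hJ (a b m : ℤ) :
      f.coeffInt a * f.coeffInt b * (f * g).coeffInt m ∈ cont (f * g) * cont f ^ 2 := by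
    rw [mul_comm (_ * _), sq]
    exact Ideal.mul_mem_mul (coeffInt_mem_cont _ m)
      (Ideal.mul_mem_mul (coeffInt_mem_cont f a) (coeffInt_mem_cont f b))
  match l with
  | 0 =>
    rw [show f.coeffInt i * f.coeffInt j * f.coeffInt k * g.coeff 0 =
        f.coeffInt i * f.coeffInt j * (f * g).coeffInt k
          - f.coeffInt i * f.coeffInt j * f.coeffInt (k - 1) * g.coeff 1
          - f.coeffInt i * f.coeffInt j * f.coeffInt (k - 2) * g.coeff 2 by
      linear_combination -(f.coeffInt i * f.coeffInt j) * hconv k (k - 1) (k - 2) rfl rfl]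
    exact sub_mem (sub_mem (hJ i j k)
      (coeffInt_mul_coeffInt_mul_coeffInt_mul_coeff_mem hg 1 (by omega) hji))
      (coeffInt_mul_coeffInt_mul_coeffInt_mul_coeff_mem hg 2 (by omega) hji)
  | 1 =>
    rw [show f.coeffInt i * f.coeffInt j * f.coeffInt k * g.coeff 1 =
        f.coeffInt i * f.coeffInt k * (f * g).coeffInt (j + 1)
          - f.coeffInt i * f.coeffInt (j + 1) * f.coeffInt k * g.coeff 0
          - f.coeffInt i * f.coeffInt (j - 1) * f.coeffInt k * g.coeff 2 by
      linear_combination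
        -(f.coeffInt i * f.coeffInt k) * hconv (j + 1) j (j - 1) (by ring) (by ring)]
    refine sub_mem (sub_mem (hJ i k _) ?_) ?_
    · rcases lt_or_eq_of_le hji with hji | rfl
      · exact coeffInt_mul_coeffInt_mul_coeffInt_mul_coeff_mem hg 0 (by omega) (by omega)
      · rw [mul_comm (f.coeffInt j)]
        exact coeffInt_mul_coeffInt_mul_coeffInt_mul_coeff_mem hg 0 (by omega) (by omega)
    · rcases lt_or_eq_of_le hkj with hkj | rfl
      · exact coeffInt_mul_coeffInt_mul_coeffInt_mul_coeff_mem hg 2 (by omega) (by omega)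
      · rw [mul_right_comm (f.coeffInt i)]
        exact coeffInt_mul_coeffInt_mul_coeffInt_mul_coeff_mem hg 2 (by omega) (by omega)
  | 2 =>
    rw [show f.coeffInt i * f.coeffInt j * f.coeffInt k * g.coeff 2 =
        f.coeffInt j * f.coeffInt k * (f * g).coeffInt (i + 2)
          - f.coeffInt (i + 2) * f.coeffInt j * f.coeffInt k * g.coeff 0
          - f.coeffInt (i + 1) * f.coeffInt j * f.coeffInt k * g.coeff 1 by
      linear_combination
        -(f.coeffInt j * f.coeffInt k) * hconv (i + 2) (i + 1) i (by ring) (by ring)]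
    exact sub_mem (sub_mem (hJ j k _)
      (coeffInt_mul_coeffInt_mul_coeffInt_mul_coeff_mem hg 0 hkj (by omega)))
      (coeffInt_mul_coeffInt_mul_coeffInt_mul_coeff_mem hg 1 hkj (by omega))
  | l + 3 => simp [coeff_eq_zero_of_natDegree_lt (show g.natDegree < l + 3 by omega)]
termination_by (f.natDegree + 3 - (i - j - 3 * k + if l = 0 then 2 else 0)).toNat
decreasing_by all_goals simp; omega

theorem coeff_mul_coeff_mul_coeff_mul_coeff_mem {f g : A[X]} (hg : g.natDegree ≤ 2)
    (i j k l : ℕ) : f.coeff i * f.coeff j * f.coeff k * g.coeff l ∈ cont (f * g) * cont f ^ 2 := by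
  wlog hji : j ≤ i generalizing i j
  · rw [mul_comm (f.coeff i)]
    exact this j i (by omega)
  wlog hkj : k ≤ j generalizing i j k
  · rcases le_total k i with hki | hik
    · rw [mul_right_comm (f.coeff i)]
      exact this j i k hki (by omega)
    · rw [mul_comm (f.coeff i * f.coeff j), ← mul_assoc]
      exact this j k i hik hji
  simpa only [coeffInt_natCast] using
    coeffInt_mul_coeffInt_mul_coeffInt_mul_coeff_mem (f := f) hg l (Int.ofNat_le.mpr hkj)
      (Int.ofNat_le.mpr hji)

theorem cont_mul_mul_cont_sq {g : A[X]} (hg : g.natDegree ≤ 2) (f : A[X]) :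
    cont (f * g) * cont f ^ 2 = cont f ^ 3 * cont g := by
  refine le_antisymm ?_ ?_
  · calc cont (f * g) * cont f ^ 2 ≤ cont f * cont g * cont f ^ 2 := by
          gcongr; exact cont_mul_le f g
      _ = cont f ^ 3 * cont g := by ring
  rw [show cont f ^ 3 * cont g = cont f * cont f * cont f * cont g by ring]
  simp only [cont]
  rw [Ideal.span_mul_span', Ideal.span_mul_span', Ideal.span_mul_span', Ideal.span_le]
  rintro _ ⟨_, ⟨_, ⟨_, ⟨i, rfl⟩, _, ⟨j, rfl⟩, rfl⟩, _, ⟨k, rfl⟩, rfl⟩, _, ⟨l, rfl⟩, rfl⟩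
  exact coeff_mul_coeff_mul_coeff_mul_coeff_mem hg i j k l

theorem cont_mul_mul_cont_pow_add {f g : A[X]} {k : ℕ}
    (h : cont (f * g) * cont f ^ k = cont f ^ (k + 1) * cont g) (n : ℕ) :
    cont (f * g) * cont f ^ (k + n) = cont f ^ (k + n + 1) * cont g := by
  rw [pow_add, ← mul_assoc, h]
  ring

theorem dmNumber_eq_add_two {g : A[X]} {k : ℕ}
    (hg : ∀ f : A[X], cont (f * g) * cont f ^ (k + 1) = cont f ^ (k + 2) * cont g) (f : A[X])
    (hf : cont (f * g) * cont f ^ k ≠ cont f ^ (k + 1) * cont g) : dmNumber A g = k + 2 := by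
  have hmem : k + 2 ∈ {m | 0 < m ∧ ∀ f : A[X],
      cont (f * g) * cont f ^ (m - 1) = cont f ^ m * cont g} := ⟨by omega, hg⟩
  refine le_antisymm (Nat.sInf_le hmem) (le_csInf ⟨_, hmem⟩ ?_)
  rintro m ⟨hm, hmf⟩
  by_contra! hlt
  obtain ⟨n, rfl⟩ : ∃ n, m = n + 1 := ⟨m - 1, by omega⟩
  have := cont_mul_mul_cont_pow_add (hmf f) (k - n)
  rw [show n + 1 - 1 + (k - n) = k by omega] at this
  exact hf this

end Polynomial

section

variable {F : Type*} [CommRing F] {R : Subring (PowerSeries F)} {n₀ : ℕ} {a : ℕ → R}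

theorem mul_eq_of_coe_eq_X_pow (ha : ∀ k, n₀ ≤ k → (a k : PowerSeries F) = PowerSeries.X ^ k)
    {p q : ℕ} (hp : n₀ ≤ p) (hq : n₀ ≤ q) : a p * a q = a (p + q) := by
  apply Subtype.coe_injective
  push_cast [ha p hp, ha q hq, ha (p + q) (by omega)]
  rw [pow_add]

theorem mem_span_singleton_of_coe_eq_X_pow
    (ha : ∀ k, n₀ ≤ k → (a k : PowerSeries F) = PowerSeries.X ^ k) {p m : ℕ} (hp : n₀ ≤ p)
    (hm : PowerSeries.X ^ m ∈ R) : a (p + m) ∈ Ideal.span {a p} := by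
  refine Ideal.mem_span_singleton'.mpr ⟨⟨_, hm⟩, Subtype.coe_injective ?_⟩
  push_cast [ha p hp, ha (p + m) (by omega)]
  rw [pow_add, mul_comm]

theorem notMem_span_pair_of_coe_eq_X_pow [Nontrivial F]
    (ha : ∀ k, n₀ ≤ k → (a k : PowerSeries F) = PowerSeries.X ^ k)
    (hgap : ∀ u ∈ R, PowerSeries.coeff 1 u = 0 ∧ PowerSeries.coeff 2 u = 0) {p : ℕ} (hp : n₀ ≤ p) :
    a (p + 2) ∉ Ideal.span {a p, a (p + 1)} := by
  intro hmem
  obtain ⟨u, v, huv⟩ := Ideal.mem_span_pair.mp hmem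
  have := congrArg (PowerSeries.coeff (p + 2) ∘ Subtype.val) huv
  simp [ha p hp, ha (p + 1) (by omega), ha (p + 2) (by omega), PowerSeries.coeff_mul_X_pow',
    (hgap u u.2).2, (hgap v v.2).1] at this

theorem C_sub_C_mul_X_mul_C_add_C_mul_X_add_C_mul_X_sq
    (ha : ∀ k, 6 ≤ k → (a k : PowerSeries F) = PowerSeries.X ^ k) :
    (C (a 6) - C (a 7) * X) * (C (a 6) + C (a 7) * X + C (a 8) * X ^ 2) =
      C (a 12) - C (a 15) * X ^ 3 := by
  have hmul {p q : ℕ} (hp : 6 ≤ p) (hq : 6 ≤ q) := mul_eq_of_coe_eq_X_pow ha hp hq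
  have h₁₄ : C (a 6) * C (a 8) = C (a 7) * C (a 7) := by
    rw [← C_mul, ← C_mul, hmul, hmul] <;> norm_num
  rw [← hmul (p := 6) (q := 6) le_rfl le_rfl, ← hmul (p := 7) (q := 8) (by norm_num) (by norm_num),
    C_mul, C_mul]
  linear_combination X ^ 2 * h₁₄

theorem span_pair_sq_mul_span_triple
    (ha : ∀ k, 6 ≤ k → (a k : PowerSeries F) = PowerSeries.X ^ k)
    (hX₃ : PowerSeries.X ^ 3 ∈ R) :
    Ideal.span {a 6, a 7} ^ 2 * Ideal.span {a 6, a 7, a 8} = Ideal.span {a 18, a 19, a 20} := by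
  have hmul {p q : ℕ} (hp : 6 ≤ p) (hq : 6 ≤ q) := mul_eq_of_coe_eq_X_pow ha hp hq
  rw [sq, Ideal.span_mul_span', Ideal.span_mul_span', ← Set.image2_mul, ← Set.image2_mul]
  simp only [Set.image2_insert_right, Set.image_insert_eq, Set.image_singleton,
    Set.image2_singleton_right, Set.union_insert, Set.union_singleton, hmul, le_refl,
    Nat.reduceAdd, Nat.reduceLeDiff, Set.mem_insert_iff, Set.mem_singleton_iff, or_true,
    true_or, Set.insert_eq_of_mem]
  have h₂₁ : a 21 ∈ Ideal.span {a 20, a 18, a 19} :=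
    Ideal.span_mono (by simp) (mem_span_singleton_of_coe_eq_X_pow (p := 18) ha (by norm_num) hX₃)
  have h₂₂ : a 22 ∈ Ideal.span {a 21, a 20, a 18, a 19} :=
    Ideal.span_mono (by simp) (mem_span_singleton_of_coe_eq_X_pow (p := 19) ha (by norm_num) hX₃)
  rw [Ideal.span_insert_eq_span h₂₂, Ideal.span_insert_eq_span h₂₁, Set.insert_comm,
    Set.pair_comm (a 20)]

end

/-- Remark 5.2: in `R = F[[s³,s⁴]]`, for `g' = s⁶ + s⁷t + s⁸t²` and `f = s⁶ - s⁷t` we have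
`fg' = s¹² - s¹⁵t³`, `c(fg') = s¹²R`, and
`c(fg')c(f) = (s¹⁸,s¹⁹)R ⊊ (s¹⁸,s¹⁹,s²⁰)R = c(f)²c(g')`; hence `μ_R(g') = 3`. -/
theorem remark_5_2 {F : Type*} [Field F] (R : Subring (PowerSeries F))
    (hR : ∀ f : PowerSeries F, f ∈ R ↔
      PowerSeries.coeff (R := F) 1 f = 0 ∧ PowerSeries.coeff (R := F) 2 f = 0 ∧ PowerSeries.coeff (R := F) 5 f = 0)
    (a : ℕ → ↥R) (ha : ∀ k, 6 ≤ k → (a k : PowerSeries F) = PowerSeries.X ^ k)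
    (g' f : Polynomial ↥R)
    (hg' : g' = Polynomial.C (a 6) + Polynomial.C (a 7) * Polynomial.X +
      Polynomial.C (a 8) * Polynomial.X ^ 2)
    (hf : f = Polynomial.C (a 6) - Polynomial.C (a 7) * Polynomial.X) :
    f * g' = Polynomial.C (a 12) - Polynomial.C (a 15) * Polynomial.X ^ 3 ∧
    cont (f * g') = Ideal.span {a 12} ∧
    cont (f * g') * cont f = Ideal.span {a 18, a 19} ∧
    cont f ^ 2 * cont g' = Ideal.span {a 18, a 19, a 20} ∧
    Ideal.span {a 18, a 19} < Ideal.span {a 18, a 19, a 20} ∧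
    dmNumber ↥R g' = 3 := by
  have hX₃ : PowerSeries.X ^ 3 ∈ R := (hR _).mpr (by simp [PowerSeries.coeff_X_pow])
  have hfg : f * g' = C (a 12) - C (a 15) * X ^ 3 := by
    rw [hf, hg', C_sub_C_mul_X_mul_C_add_C_mul_X_add_C_mul_X_sq ha]
  have hcf : cont f = Ideal.span {a 6, a 7} := by
    rw [hf, ← pow_one X, cont_C_sub_C_mul_X_pow _ _ one_ne_zero]
  have hcg : cont g' = Ideal.span {a 6, a 7, a 8} := by
    rw [hg', cont_C_add_C_mul_X_add_C_mul_X_sq]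
  have hcfg : cont (f * g') = Ideal.span {a 12} := by
    rw [hfg, cont_C_sub_C_mul_X_pow _ _ three_ne_zero, Set.pair_comm]
    exact Ideal.span_insert_eq_span
      (mem_span_singleton_of_coe_eq_X_pow (p := 12) ha (by norm_num) hX₃)
  have h₃ : cont (f * g') * cont f = Ideal.span {a 18, a 19} := by
    rw [hcfg, hcf, Ideal.span_singleton_mul_span_pair, mul_eq_of_coe_eq_X_pow ha,
      mul_eq_of_coe_eq_X_pow ha] <;> norm_num
  have h₄ : cont f ^ 2 * cont g' = Ideal.span {a 18, a 19, a 20} := by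
    rw [hcf, hcg, span_pair_sq_mul_span_triple ha hX₃]
  have h₅ : Ideal.span {a 18, a 19} < Ideal.span {a 18, a 19, a 20} := by
    refine SetLike.lt_iff_le_and_exists.mpr ⟨Ideal.span_mono (by simp [Set.insert_subset_iff]),
      a 20, Ideal.subset_span (by simp), ?_⟩
    exact notMem_span_pair_of_coe_eq_X_pow (p := 18) ha
      (fun u hu => ⟨((hR u).mp hu).1, ((hR u).mp hu).2.1⟩) (by norm_num)
  refine ⟨hfg, hcfg, h₃, h₄, h₅, dmNumber_eq_add_two (k := 1) (fun f => ?_) f ?_⟩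
  · rw [hg']
    exact cont_mul_mul_cont_sq (by compute_degree) f
  · rw [pow_one, h₃, h₄]
    exact h₅.ne
end
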